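/- For a non-decreasing right-continuous function m and continuous nonnegative function g on [0,∞), the condition 'mⱼ increases only when gⱼ = 0' (i.e., for all s < t, if g > 0 on [s,t] then m(s) = m(t)) is equivalent to ∫₀^∞ g(t) dm(t) = 0, where dm is the Lebesgue–Stieltjes measure of m. -/

import Mathlib

/-!
The integral of `ofReal ∘ g` vanishes exactly when `dm` gives no mass to the relatively open set
`{g > 0} ∩ [0, ∞)`. Mass on an interval `(s, t]` inside that set would make `m` increase on
`[s, t]`. Conversely, if `m` is constant on each compact interval of the set, every point of the
set has a relative neighbourhood `[s, t]` of mass `m t - m s = 0` (no atom at `s`, as `m` is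
continuous), and in a second-countable space a set covered by null relative neighbourhoods of its
points is null.
-/

open Set Filter Topology MeasureTheory

theorem setLIntegral_ofReal_eq_zero_iff {α : Type*} [MeasurableSpace α] {μ : Measure α}
    {g : α → ℝ} (hg : Measurable g) {s : Set α} (hs : MeasurableSet s) :
    ∫⁻ x in s, ENNReal.ofReal (g x) ∂μ = 0 ↔ μ ({x | 0 < g x} ∩ s) = 0 := by
  rw [lintegral_eq_zero_iff hg.ennreal_ofReal, EventuallyEq, ae_iff,
    Measure.restrict_apply' hs]
  simp only [Pi.zero_apply, ENNReal.ofReal_eq_zero, not_le]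

namespace StieltjesFunction

variable (f : StieltjesFunction ℝ)

theorem measure_Icc_of_continuousAt {a : ℝ} (ha : ContinuousAt f a) (b : ℝ) :
    f.measure (Icc a b) = ENNReal.ofReal (f b - f a) := by
  rw [f.measure_Icc, ha.continuousWithinAt.leftLim_eq]

theorem eq_of_measure_Ioc_eq_zero {s t : ℝ} (hst : s ≤ t) (h : f.measure (Ioc s t) = 0) :
    f s = f t := by
  rw [f.measure_Ioc, ENNReal.ofReal_eq_zero, sub_nonpos] at h
  exact le_antisymm (f.mono hst) h

theorem measure_inter_Ici_eq_zero_iff (hf : Continuous f) {U : Set ℝ} (hU : IsOpen U) (a : ℝ) :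
    f.measure (U ∩ Ici a) = 0 ↔ ∀ s t, a ≤ s → s ≤ t → Icc s t ⊆ U → f s = f t := by
  refine ⟨fun h s t has hst hU => f.eq_of_measure_Ioc_eq_zero hst (measure_mono_null ?_ h),
    fun H => measure_null_of_locally_null _ ?_⟩
  · exact fun r hr => ⟨hU (Ioc_subset_Icc_self hr), has.trans hr.1.le⟩
  rintro x ⟨hxU, hxa⟩
  obtain ⟨ε, hε, hball⟩ := Metric.nhds_basis_closedBall.mem_iff.1 (hU.mem_nhds hxU)
  rw [Real.closedBall_eq_Icc] at hball
  have hnhds : Icc (max (x - ε) a) (x + ε) ∈ 𝓝[Ici a] x :=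
    mem_of_superset (inter_mem_nhdsWithin _ (Icc_mem_nhds (show x - ε < x by linarith) (show x < x + ε by linarith)))
      fun r ⟨hra, hr⟩ => ⟨max_le hr.1 hra, hr.2⟩
  refine ⟨_, nhdsWithin_mono x inter_subset_right hnhds, ?_⟩
  rw [f.measure_Icc_of_continuousAt hf.continuousAt, ENNReal.ofReal_eq_zero, sub_nonpos,
    H _ _ (le_max_right _ _) (max_le (by linarith) (hxa.trans (by linarith)))
      ((Icc_subset_Icc_left (le_max_left _ _)).trans hball)]

end StieltjesFunction

theorem increases_only_when_zero_iff_integral_zero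
    (g : ℝ → ℝ) (hg : Continuous g)
    (m : StieltjesFunction ℝ) (hm : Continuous m) :
    (∀ s t : ℝ, 0 ≤ s → s ≤ t → (∀ r ∈ Set.Icc s t, 0 < g r) → m s = m t)
      ↔ ∫⁻ t in Set.Ici (0:ℝ), ENNReal.ofReal (g t) ∂m.measure = 0 := by
  rw [setLIntegral_ofReal_eq_zero_iff hg.measurable measurableSet_Ici,
    m.measure_inter_Ici_eq_zero_iff hm (isOpen_lt continuous_const hg)]
  rfl
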